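/- arXiv:1705.10826 — 4 statements merged into one kernel-verified Lean document; each statement's English description precedes it below -/
import Mathlib

section
/- For every exploration strategy of an edge-weighted cycle C on n ≥ 3 vertices from homebase v_0, at most one edge of C is traversed by no walk of the strategy; consequently the total distance traversed by the walks of the strategy is at least w(C) minus the maximum edge weight of C. -/
/-!
Two distinct untraversed edges `s(i, i + 1)` and `s(j, j + 1)` cut the ring into the arcs
`i + 1, …, j` and `j + 1, …, i`. A walk using neither edge cannot leave the arc it starts in,
so the arc not containing the homebase is never visited. Hence all edges but at most one are
traversed, each traversed edge is paid for by some walk, and the untraversed one weighs at most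
the maximum edge weight.
-/
open SimpleGraph

/-- An exploration strategy on a graph `G` from homebase `h`: a nonempty finite
family of walks, each starting at `h`, that together visit every vertex. -/
structure ExplStrategy {V : Type*} (G : SimpleGraph V) (h : V) where
  k : ℕ
  kpos : 0 < k
  ends : Fin k → V
  walks : (i : Fin k) → G.Walk h (ends i)
  covers : ∀ v : V, ∃ i, v ∈ (walks i).support

/-- The weight of a walk: the sum of the weights of its edges, with multiplicity. -/
def walkWeight {V : Type*} {G : SimpleGraph V} (w : Sym2 V → ℝ) {a b : V}
    (p : G.Walk a b) : ℝ := (p.edges.map w).sum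

/-- Cost of a strategy: `k·q` plus the total distance traversed. -/
noncomputable def stratCost {V : Type*} {G : SimpleGraph V} {h : V}
    (w : Sym2 V → ℝ) (q : ℝ) (S : ExplStrategy G h) : ℝ :=
  (S.k : ℝ) * q + ∑ i, walkWeight w (S.walks i)

/-- Weighted distance between two vertices: infimum of weights of connecting walks. -/
noncomputable def wdist {V : Type*} (G : SimpleGraph V) (w : Sym2 V → ℝ) (u x : V) : ℝ :=
  sInf {c : ℝ | ∃ p : G.Walk u x, walkWeight w p = c}

/-- The ring (cycle graph) on `Fin n`, with edges `e i = s(i, i+1)`. -/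
def ringGraph (n : ℕ) [NeZero n] : SimpleGraph (Fin n) :=
  SimpleGraph.fromRel (fun a b => b = a + 1)

namespace Finset

variable {ι α M : Type*} [AddCommMonoid M]

theorem sum_le_sum_map_of_subset [PartialOrder M] [IsOrderedAddMonoid M] [DecidableEq α]
    {s : Finset α} {l : List α} {f : α → M} (hs : ∀ a ∈ s, a ∈ l) (hf : ∀ a ∈ l, 0 ≤ f a) :
    ∑ a ∈ s, f a ≤ (l.map f).sum :=
  calc ∑ a ∈ s, f a ≤ ∑ a ∈ l.dedup.toFinset, f a :=
        sum_le_sum_of_subset_of_nonneg (fun a ha => by simpa using hs a ha)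
          (fun a ha _ => hf a (by simpa using ha))
    _ = (l.dedup.map f).sum := List.sum_toFinset f (List.nodup_dedup l)
    _ ≤ (l.map f).sum :=
        ((List.dedup_sublist l).map f).sum_le_sum (by simpa using hf)

theorem sum_biUnion_le_sum_sum [PartialOrder M] [IsOrderedAddMonoid M] [DecidableEq α]
    {s : Finset ι} {t : ι → Finset α} {f : α → M} (hf : ∀ i ∈ s, ∀ a ∈ t i, 0 ≤ f a) :
    ∑ a ∈ s.biUnion t, f a ≤ ∑ i ∈ s, ∑ a ∈ t i, f a := by
  classical
  induction s using Finset.induction_on with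
  | empty => simp
  | insert i s hi ih =>
    rw [biUnion_insert, sum_insert hi]
    have hinter : 0 ≤ ∑ a ∈ t i ∩ s.biUnion t, f a :=
      sum_nonneg fun a ha => hf i (mem_insert_self i s) a (mem_inter.1 ha).1
    calc ∑ a ∈ t i ∪ s.biUnion t, f a
        ≤ ∑ a ∈ t i ∪ s.biUnion t, f a + ∑ a ∈ t i ∩ s.biUnion t, f a :=
          le_add_of_nonneg_right hinter
      _ = ∑ a ∈ t i, f a + ∑ a ∈ s.biUnion t, f a := sum_union_inter
      _ ≤ ∑ a ∈ t i, f a + ∑ j ∈ s, ∑ a ∈ t j, f a := by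
          gcongr; exact ih fun j hj => hf j (mem_insert_of_mem hj)

theorem sum_le_sup'_of_card_le_one [LinearOrder M] [IsOrderedAddMonoid M] {s t : Finset ι}
    (hst : s ⊆ t) (hs : #s ≤ 1) (ht : t.Nonempty) {f : ι → M} (hf : ∀ i ∈ t, 0 ≤ f i) :
    ∑ i ∈ s, f i ≤ t.sup' ht f := by
  rcases s.eq_empty_or_nonempty with rfl | hne
  · obtain ⟨i, hi⟩ := ht
    rw [sum_empty]
    exact (hf i hi).trans (le_sup' f hi)
  · obtain ⟨i, rfl⟩ := card_eq_one.1 (le_antisymm hs hne.card_pos)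
    rw [sum_singleton]
    exact le_sup' f (hst (mem_singleton_self i))

end Finset

theorem SimpleGraph.sum_le_sum_walkWeight {V ι : Type*} [Fintype ι] [DecidableEq V]
    {G : SimpleGraph V} {w : Sym2 V → ℝ} (hw : ∀ e ∈ G.edgeSet, 0 ≤ w e) {u v : ι → V}
    (p : ∀ i, G.Walk (u i) (v i)) {s : Finset (Sym2 V)} (hs : ∀ e ∈ s, ∃ i, e ∈ (p i).edges) :
    ∑ e ∈ s, w e ≤ ∑ i, walkWeight w (p i) := by
  have hwp : ∀ i, ∀ e ∈ (p i).edges, 0 ≤ w e := fun i e he =>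
    hw e ((p i).edges_subset_edgeSet he)
  calc ∑ e ∈ s, w e ≤ ∑ e ∈ Finset.univ.biUnion (fun i => (p i).edges.toFinset), w e :=
        Finset.sum_le_sum_of_subset_of_nonneg (fun e he => by simpa using hs e he)
          fun e he _ => by
            obtain ⟨i, -, hi⟩ := Finset.mem_biUnion.1 he
            exact hwp i e (List.mem_toFinset.1 hi)
    _ ≤ ∑ i, ∑ e ∈ (p i).edges.toFinset, w e :=
        Finset.sum_biUnion_le_sum_sum fun i _ e he => hwp i e (List.mem_toFinset.1 he)
    _ ≤ ∑ i, walkWeight w (p i) :=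
        Finset.sum_le_sum fun i _ =>
          Finset.sum_le_sum_map_of_subset (fun e he => List.mem_toFinset.1 he) (hwp i)

namespace Fin

variable {n : ℕ}

theorem val_sub_cases (x y : Fin n) :
    (y.val ≤ x.val ∧ (x - y).val = x.val - y.val) ∨
      (x.val < y.val ∧ (x - y).val = n + x.val - y.val) := by
  rcases le_or_gt y x with h | h
  · exact Or.inl ⟨h, sub_val_of_le h⟩
  · exact Or.inr ⟨h, coe_sub_iff_lt.2 h⟩

theorem val_add_one_cases [NeZero n] (hn : 1 < n) (x : Fin n) :
    (x.val + 1 < n ∧ (x + 1).val = x.val + 1) ∨ (x.val + 1 = n ∧ (x + 1).val = 0) := by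
  have h1 : (1 : Fin n).val = 1 := by rw [val_one', Nat.mod_eq_of_lt hn]
  rw [val_add_eq_ite, h1]
  split_ifs <;> omega

end Fin

section RingGraph

variable {n : ℕ} [NeZero n]

theorem ringGraph_adj {x y : Fin n} :
    (ringGraph n).Adj x y ↔ x ≠ y ∧ (y = x + 1 ∨ x = y + 1) := by
  simp [ringGraph]

theorem exists_eq_ringEdge_of_mem_edgeSet {e : Sym2 (Fin n)} (he : e ∈ (ringGraph n).edgeSet) :
    ∃ m : Fin n, e = s(m, m + 1) := by
  induction e using Sym2.ind with
  | _ x y =>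
    obtain ⟨-, rfl | rfl⟩ := ringGraph_adj.1 ((ringGraph n).mem_edgeSet.1 he)
    · exact ⟨x, rfl⟩
    · exact ⟨y, Sym2.eq_swap⟩

theorem ringEdge_injective (hn : 3 ≤ n) : Function.Injective fun m : Fin n => s(m, m + 1) := by
  intro i j h
  rcases Sym2.eq_iff.1 h with ⟨hij, -⟩ | ⟨hij, hji⟩
  · exact hij
  · have := Fin.val_add_one_cases (by omega) i
    have := Fin.val_add_one_cases (by omega) j
    rw [Fin.ext_iff] at hij hji
    omega

/-- The arc of the ring running from `a` to `b` in the direction of increasing index. -/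
def ringArc (a b : Fin n) : Set (Fin n) := {x | (x - a).val ≤ (b - a).val}

theorem mem_ringArc_or_mem_ringArc (hn : 1 < n) (i j x : Fin n) :
    x ∈ ringArc (i + 1) j ∨ x ∈ ringArc (j + 1) i := by
  have := Fin.val_sub_cases x (i + 1); have := Fin.val_sub_cases j (i + 1)
  have := Fin.val_sub_cases x (j + 1); have := Fin.val_sub_cases i (j + 1)
  have := Fin.val_add_one_cases hn i; have := Fin.val_add_one_cases hn j
  simp only [ringArc, Set.mem_ofPred_eq]
  omega

theorem add_one_notMem_ringArc (hn : 1 < n) {i j : Fin n} (hij : i ≠ j) :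
    j + 1 ∉ ringArc (i + 1) j := by
  have := Fin.val_sub_cases (j + 1) (i + 1); have := Fin.val_sub_cases j (i + 1)
  have := Fin.val_add_one_cases hn i; have := Fin.val_add_one_cases hn j
  rw [Ne, Fin.ext_iff] at hij
  simp only [ringArc, Set.mem_ofPred_eq]
  omega

theorem ringArc_boundary (hn : 1 < n) {a b x y : Fin n} (hxy : (ringGraph n).Adj x y)
    (hx : x ∈ ringArc a b) (hy : y ∉ ringArc a b) :
    s(x, y) = s(b, b + 1) ∨ s(x, y) = s(a - 1, a) := by
  simp only [ringArc, Set.mem_ofPred_eq] at hx hy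
  obtain ⟨-, rfl | rfl⟩ := ringGraph_adj.1 hxy
  · left
    have := Fin.val_sub_cases (x + 1) a; have := Fin.val_sub_cases x a
    have := Fin.val_sub_cases b a; have := Fin.val_add_one_cases hn x
    have : x = b := by rw [Fin.ext_iff]; omega
    rw [this]
  · right
    have := Fin.val_sub_cases (y + 1) a; have := Fin.val_sub_cases y a
    have := Fin.val_sub_cases b a; have := Fin.val_add_one_cases hn y
    have : y + 1 = a := by rw [Fin.ext_iff]; omega
    rw [← this, add_sub_cancel_right, Sym2.eq_swap]

theorem SimpleGraph.Walk.end_mem_ringArc (hn : 1 < n) {i j u v : Fin n}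
    (p : (ringGraph n).Walk u v) (hi : s(i, i + 1) ∉ p.edges) (hj : s(j, j + 1) ∉ p.edges)
    (hu : u ∈ ringArc (i + 1) j) : v ∈ ringArc (i + 1) j := by
  by_contra hv
  obtain ⟨d, hd, hfst, hsnd⟩ := p.exists_boundary_dart _ hu hv
  have hde : s(d.fst, d.snd) ∈ p.edges := List.mem_map_of_mem hd
  rcases ringArc_boundary hn d.adj hfst hsnd with h | h
  · exact hj (h ▸ hde)
  · rw [add_sub_cancel_right] at h
    exact hi (h ▸ hde)

theorem ExplStrategy.eq_of_ringEdge_notMem_edges (hn : 1 < n) {h : Fin n}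
    (S : ExplStrategy (ringGraph n) h) {i j : Fin n} (hi : ∀ a, s(i, i + 1) ∉ (S.walks a).edges)
    (hj : ∀ a, s(j, j + 1) ∉ (S.walks a).edges) : i = j := by
  by_contra hij
  wlog hh : h ∈ ringArc (i + 1) j generalizing i j
  · exact this hj hi (Ne.symm hij) ((mem_ringArc_or_mem_ringArc hn i j h).resolve_left hh)
  obtain ⟨a, ha⟩ := S.covers (j + 1)
  have hsub := (S.walks a).edges_takeUntil_subset_edges ha
  exact add_one_notMem_ringArc hn hij <| ((S.walks a).takeUntil _ ha).end_mem_ringArc hn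
    (fun h => hi a (hsub h)) (fun h => hj a (hsub h)) hh

end RingGraph

theorem ring_at_most_one_edge_omitted_general (n : ℕ) [NeZero n] (hn : 3 ≤ n)
    (w : Sym2 (Fin n) → ℝ) (hw : ∀ i : Fin n, 0 < w s(i, i + 1))
    (S : ExplStrategy (ringGraph n) 0) :
    (∀ i j : Fin n,
        (∀ a, s(i, i + 1) ∉ (S.walks a).edges) →
        (∀ a, s(j, j + 1) ∉ (S.walks a).edges) → i = j) ∧
    (∑ j : Fin n, w s(j, j + 1)) -
        Finset.univ.sup' (Finset.univ_nonempty_iff.mpr ⟨0⟩) (fun i : Fin n => w s(i, i + 1))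
      ≤ ∑ a, walkWeight w (S.walks a) := by
  classical
  have hunique : ∀ i j : Fin n, (∀ a, s(i, i + 1) ∉ (S.walks a).edges) →
      (∀ a, s(j, j + 1) ∉ (S.walks a).edges) → i = j :=
    fun _ _ => S.eq_of_ringEdge_notMem_edges (by omega)
  refine ⟨hunique, ?_⟩
  let U := Finset.univ.filter fun m : Fin n => ∃ a, s(m, m + 1) ∈ (S.walks a).edges
  have hw' : ∀ e ∈ (ringGraph n).edgeSet, 0 ≤ w e := fun e he => by
    obtain ⟨m, rfl⟩ := exists_eq_ringEdge_of_mem_edgeSet he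
    exact (hw m).le
  have htraversed : ∑ m ∈ U, w s(m, m + 1) ≤ ∑ a, walkWeight w (S.walks a) := by
    rw [← Finset.sum_image fun x _ y _ h => ringEdge_injective hn h]
    refine sum_le_sum_walkWeight hw' S.walks fun e he => ?_
    obtain ⟨m, hm, rfl⟩ := Finset.mem_image.1 he
    exact (Finset.mem_filter.1 hm).2
  have homitted : ∑ m ∈ Uᶜ, w s(m, m + 1) ≤
      Finset.univ.sup' (Finset.univ_nonempty_iff.mpr ⟨0⟩) (fun i : Fin n => w s(i, i + 1)) :=
    Finset.sum_le_sup'_of_card_le_one (Finset.subset_univ _)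
      (Finset.card_le_one.2 fun i hi j hj =>
        hunique i j (by simpa [U] using hi) (by simpa [U] using hj))
      _ fun m _ => (hw m).le
  linarith [Finset.sum_add_sum_compl U fun m => w s(m, m + 1)]

/-- For every exploration strategy of an edge-weighted ring on `n ≥ 3` vertices from
homebase `v_0`: at most one edge is traversed by no walk of the strategy, and
consequently the total distance traversed is at least `w(C)` minus the maximum
edge weight. -/
theorem ring_at_most_one_edge_omitted (n : ℕ) [NeZero n] (hn : 3 ≤ n)
    (w : Sym2 (Fin n) → ℝ) (hw : ∀ i : Fin n, 0 < w s(i, i + 1))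
    (q : ℝ) (hq : 0 ≤ q)
    (S : ExplStrategy (ringGraph n) 0) :
    (∀ i j : Fin n,
        (∀ a, s(i, i + 1) ∉ (S.walks a).edges) →
        (∀ a, s(j, j + 1) ∉ (S.walks a).edges) → i = j) ∧
    (∑ j : Fin n, w s(j, j + 1)) -
        Finset.univ.sup' (Finset.univ_nonempty_iff.mpr ⟨0⟩) (fun i : Fin n => w s(i, i + 1))
      ≤ ∑ a, walkWeight w (S.walks a) :=
  ring_at_most_one_edge_omitted_general n hn w hw S
end

section
/- Let C be a cycle on n ≥ 3 vertices in which every edge has the same weight ε > 0, with homebase v_0 and invoking cost q ≥ 0. Then the minimum cost of an exploration strategy of C equals q + ε·(n − 1). -/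
open SimpleGraph

/-!
Every walk from the homebase visits at most as many new vertices as it has edges, so any
strategy covering all `N` vertices traverses at least `N - 1` edges and invokes at least one
walk; with uniform weight `ε` its cost is at least `q + ε (N - 1)`. On the ring the single
walk `0 → 1 → ⋯ → n - 1` attains this bound.
-/

section

variable {V : Type*} {G : SimpleGraph V} {h : V}

theorem walkWeight_const (ε : ℝ) {a b : V} (p : G.Walk a b) :
    walkWeight (fun _ => ε) p = ε * p.length := by
  simp [walkWeight, List.map_const', mul_comm]

namespace ExplStrategy

def ofWalk {v : V} (p : G.Walk h v) (hp : ∀ u, u ∈ p.support) : ExplStrategy G h where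
  k := 1
  kpos := one_pos
  ends _ := v
  walks _ := p
  covers u := ⟨0, hp u⟩

theorem stratCost_ofWalk (w : Sym2 V → ℝ) (q : ℝ) {v : V} (p : G.Walk h v)
    (hp : ∀ u, u ∈ p.support) : stratCost w q (ofWalk p hp) = q + walkWeight w p := by
  show ((1 : ℕ) : ℝ) * q + ∑ _ : Fin 1, walkWeight w p = _
  simp

theorem card_le_sum_length_add_one [Fintype V] (S : ExplStrategy G h) :
    Fintype.card V ≤ ∑ i, (S.walks i).length + 1 := by
  classical
  let visited : Fin S.k → Finset V := fun i => (S.walks i).support.tail.toFinset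
  have hcover : Finset.univ ⊆ insert h (Finset.univ.biUnion visited) := by
    intro v _
    obtain ⟨i, hi⟩ := S.covers v
    rw [← Walk.cons_tail_support, List.mem_cons] at hi
    rcases hi with rfl | hi
    · exact Finset.mem_insert_self _ _
    · exact Finset.mem_insert_of_mem
        (Finset.mem_biUnion.mpr ⟨i, Finset.mem_univ _, by simpa [visited]⟩)
  have hvisited (i : Fin S.k) : (visited i).card ≤ (S.walks i).length := by
    simpa [Walk.length_support] using List.toFinset_card_le (S.walks i).support.tail
  calc Fintype.card V = (Finset.univ : Finset V).card := Finset.card_univ.symm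
    _ ≤ (Finset.univ.biUnion visited).card + 1 :=
        (Finset.card_le_card hcover).trans (Finset.card_insert_le _ _)
    _ ≤ ∑ i, (visited i).card + 1 := by gcongr; exact Finset.card_biUnion_le
    _ ≤ ∑ i, (S.walks i).length + 1 := by gcongr with i; exact hvisited i

theorem le_stratCost_const [Fintype V] (S : ExplStrategy G h) {ε q : ℝ} (hε : 0 ≤ ε)
    (hq : 0 ≤ q) : q + ε * ((Fintype.card V : ℝ) - 1) ≤ stratCost (fun _ => ε) q S := by
  have hk : (1 : ℝ) ≤ S.k := by exact_mod_cast S.kpos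
  have hlen : (Fintype.card V : ℝ) - 1 ≤ ∑ i, ((S.walks i).length : ℝ) :=
    sub_le_iff_le_add.mpr (by exact_mod_cast S.card_le_sum_length_add_one)
  simp only [stratCost, walkWeight_const, ← Finset.mul_sum]
  exact add_le_add (le_mul_of_one_le_left hq hk) (mul_le_mul_of_nonneg_left hlen hε)

end ExplStrategy

end

theorem ringGraph_adj_succ {n : ℕ} [NeZero n] {m : ℕ} (hm : m + 1 < n) :
    (ringGraph n).Adj ⟨m, by omega⟩ ⟨m + 1, hm⟩ := by
  refine ⟨by simp, Or.inl (Fin.ext ?_)⟩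
  rw [Fin.val_add, Fin.val_one', Nat.add_mod_mod, Nat.mod_eq_of_lt hm]

def ringPath (n : ℕ) [NeZero n] : (m : ℕ) → (hm : m < n) → (ringGraph n).Walk 0 ⟨m, hm⟩
  | 0, _ => Walk.nil
  | m + 1, hm => (ringPath n m (by omega)).concat (ringGraph_adj_succ hm)

theorem ringPath_length (n : ℕ) [NeZero n] (m : ℕ) (hm : m < n) :
    (ringPath n m hm).length = m := by
  induction m with
  | zero => rfl
  | succ m ih => simp [ringPath, ih]

theorem mem_support_ringPath (n : ℕ) [NeZero n] {j m : ℕ} (hm : m < n) (hj : j ≤ m) :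
    (⟨j, by omega⟩ : Fin n) ∈ (ringPath n m hm).support := by
  induction m with
  | zero =>
    obtain rfl : j = 0 := by omega
    simp [ringPath]
  | succ m ih =>
    rw [ringPath, Walk.support_concat, List.mem_append, List.mem_singleton]
    rcases Nat.lt_or_ge j (m + 1) with hj' | hj'
    · exact Or.inl (ih _ (by omega))
    · obtain rfl : j = m + 1 := by omega
      exact Or.inr rfl

theorem ring_uniform_optimal_general (n : ℕ) [NeZero n]
    (ε : ℝ) (hε : 0 < ε) (q : ℝ) (hq : 0 ≤ q) :
    IsLeast {c : ℝ | ∃ S : ExplStrategy (ringGraph n) 0,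
        stratCost (fun _ => ε) q S = c} (q + ε * ((n : ℝ) - 1)) := by
  have hn : n - 1 < n := Nat.sub_one_lt (NeZero.ne n)
  have hcover (v : Fin n) : v ∈ (ringPath n (n - 1) hn).support :=
    mem_support_ringPath n hn (Nat.le_sub_one_of_lt v.isLt)
  refine ⟨⟨ExplStrategy.ofWalk _ hcover, ?_⟩, ?_⟩
  · rw [ExplStrategy.stratCost_ofWalk, walkWeight_const, ringPath_length,
      Nat.cast_pred (Nat.pos_of_neZero n)]
  · rintro _ ⟨S, rfl⟩
    simpa using S.le_stratCost_const hε.le hq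

/-- For a ring on `n ≥ 3` vertices in which every edge has the same weight `ε > 0`,
with homebase `v_0` and invoking cost `q ≥ 0`, the minimum cost of an exploration
strategy equals `q + ε·(n - 1)`. -/
theorem ring_uniform_optimal (n : ℕ) [NeZero n] (hn : 3 ≤ n)
    (ε : ℝ) (hε : 0 < ε) (q : ℝ) (hq : 0 ≤ q) :
    IsLeast {c : ℝ | ∃ S : ExplStrategy (ringGraph n) 0,
        stratCost (fun _ => ε) q S = c} (q + ε * ((n : ℝ) - 1)) :=
  ring_uniform_optimal_general n ε hε q hq
end

section
/- Let T be a finite edge-weighted tree with at least two vertices, rooted at the homebase r, with invoking cost q ≥ 0, and let S be a cost-optimal exploration strategy for T. Then for every vertex v ≠ r, every walk of S that visits at least one vertex of the subtree T_v also visits at least one leaf of T_v. -/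
open SimpleGraph

/-- A strategy is cost-optimal if no exploration strategy has strictly smaller cost. -/
def IsOptimal {V : Type*} {G : SimpleGraph V} {h : V} (w : Sym2 V → ℝ) (q : ℝ)
    (S : ExplStrategy G h) : Prop :=
  ∀ S' : ExplStrategy G h, stratCost w q S ≤ stratCost w q S'

/-- `u` belongs to the subtree `T_v` of the tree `G` rooted at `r`:
`v` lies on every (equivalently, in a tree, the unique) path from `r` to `u`. -/
def InSubtree {V : Type*} (G : SimpleGraph V) (r v u : V) : Prop :=
  ∀ p : G.Path r u, v ∈ p.1.support

/-- `x` is a leaf of the tree `G` rooted at `r`: a vertex of degree 1 different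
from the root. -/
def IsTLeaf {V : Type*} (G : SimpleGraph V) (r x : V) : Prop :=
  x ≠ r ∧ ∃! y, G.Adj x y

/-- `u` is a child of `v` in the tree `G` rooted at `r`. -/
def IsTChild {V : Type*} (G : SimpleGraph V) (r v u : V) : Prop :=
  G.Adj v u ∧ InSubtree G r v u

open scoped Classical in
/-- Total edge weight of the graph `G`. -/
noncomputable def totalWeight {V : Type*} [Fintype V] (G : SimpleGraph V)
    (w : Sym2 V → ℝ) : ℝ :=
  ∑ e : Sym2 V, if e ∈ G.edgeSet then w e else 0

/-!
Suppose the walk `W_a` enters `T_v` but visits no leaf of it, and let `m` be a deepest vertex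
of `T_v` on `W_a`. Then `m` is not a leaf, so it has a child `c`; every neighbour of `m` on
`W_a` is shallower than `m`, hence is the parent of `m`. So `c` is not on `W_a`, and the walk
covering `c` passes through `m`. On the other hand, at its first visit `W_a` reaches `m` from
the parent and either stops or goes straight back, so cutting that visit out of `W_a` gives a
strictly cheaper strategy.
-/

section

variable {V : Type*} {G : SimpleGraph V}

section walkWeight

variable (w : Sym2 V → ℝ)

@[simp]
lemma walkWeight_cons {a b c : V} (h : G.Adj a b) (p : G.Walk b c) :
    walkWeight w (Walk.cons h p) = w s(a, b) + walkWeight w p := by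
  simp [walkWeight]

@[simp]
lemma walkWeight_append {a b c : V} (p : G.Walk a b) (p' : G.Walk b c) :
    walkWeight w (p.append p') = walkWeight w p + walkWeight w p' := by
  simp [walkWeight, Walk.edges_append]

@[simp]
lemma walkWeight_concat {a b c : V} (p : G.Walk a b) (h : G.Adj b c) :
    walkWeight w (p.concat h) = walkWeight w p + w s(b, c) := by
  simp [walkWeight, Walk.edges_concat]

end walkWeight

/-- At its first visit the walk reaches `m` from some `x` and then either ends or goes back to
`x`, so that visit can be cut out. -/
lemma exists_walkWeight_lt_of_neighbors_eq {w : Sym2 V → ℝ} (hw : ∀ e ∈ G.edgeSet, 0 < w e)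
    {h e m : V} (W : G.Walk h e) (hm : m ∈ W.support) (hmh : m ≠ h)
    (hnbr : ∀ y z, G.Adj m y → G.Adj m z → y ∈ W.support → z ∈ W.support → y = z) :
    ∃ (e' : V) (W' : G.Walk h e'), walkWeight w W' < walkWeight w W ∧
      ∀ u ∈ W.support, u ≠ m → u ∈ W'.support := by
  classical
  obtain ⟨W₁, W₂, rfl⟩ : ∃ (W₁ : G.Walk h m) (W₂ : G.Walk m e), W₁.append W₂ = W :=
    ⟨_, _, W.take_spec hm⟩
  obtain ⟨x, p, hxm, rfl⟩ : ∃ (x : V) (p : G.Walk h x) (hxm : G.Adj x m), W₁ = p.concat hxm :=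
    ⟨_, _, _, (Walk.concat_dropLast (W₁.adj_penultimate (Walk.not_nil_of_ne hmh.symm))).symm⟩
  have hxm_pos : 0 < w s(x, m) := hw _ hxm
  cases W₂ with
  | nil =>
    refine ⟨x, p, by simpa using hxm_pos, fun u hu hum => ?_⟩
    simpa [Walk.support_concat, hum] using hu
  | cons hmy W₂ =>
    have hmy_pos : 0 < w s(m, _) := hw _ hmy
    obtain rfl := hnbr _ _ hmy hxm.symm (by simp) (by simp [Walk.support_concat])
    refine ⟨_, p.append W₂, by simp; linarith, fun u hu hum => ?_⟩
    simpa [Walk.support_concat, Walk.mem_support_append_iff, hum] using hu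

namespace ExplStrategy

variable {h : V}

def replaceWalk (S : ExplStrategy G h) (a : Fin S.k) {e : V} (W : G.Walk h e)
    (hcov : ∀ u ∈ (S.walks a).support, u ∈ W.support ∨ ∃ j ≠ a, u ∈ (S.walks j).support) :
    ExplStrategy G h :=
  let f := Function.update (fun j => (⟨S.ends j, S.walks j⟩ : (t : V) × G.Walk h t)) a ⟨e, W⟩
  { k := S.k
    kpos := S.kpos
    ends := fun j => (f j).1
    walks := fun j => (f j).2
    covers := fun u => by
      obtain ⟨j, hj⟩ := S.covers u
      by_cases hja : j = a
      · subst hja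
        rcases hcov u hj with hW | ⟨j', hj'a, hj'⟩
        · exact ⟨j, by simp only [f]; rwa [Function.update_self]⟩
        · exact ⟨j', by simp only [f]; rwa [Function.update_of_ne hj'a]⟩
      · exact ⟨j, by simp only [f]; rwa [Function.update_of_ne hja]⟩ }

variable (w : Sym2 V → ℝ) (q : ℝ) (S : ExplStrategy G h) (a : Fin S.k) {e : V} (W : G.Walk h e)
  (hcov : ∀ u ∈ (S.walks a).support, u ∈ W.support ∨ ∃ j ≠ a, u ∈ (S.walks j).support)

lemma walkWeight_replaceWalk_walks (j : Fin S.k) :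
    walkWeight w ((S.replaceWalk a W hcov).walks j) =
      Function.update (fun j => walkWeight w (S.walks j)) a (walkWeight w W) j :=
  Function.apply_update (fun _ (p : (t : V) × G.Walk h t) => walkWeight w p.2) _ a _ j

lemma stratCost_replaceWalk :
    stratCost w q (S.replaceWalk a W hcov) =
      stratCost w q S + (walkWeight w W - walkWeight w (S.walks a)) := by
  show (S.k : ℝ) * q + ∑ j : Fin S.k, walkWeight w ((S.replaceWalk a W hcov).walks j) = _
  rw [Finset.sum_congr rfl fun j _ => walkWeight_replaceWalk_walks w S a W hcov j,
    Finset.sum_update_of_mem (Finset.mem_univ a), stratCost,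
    ← Finset.add_sum_erase _ _ (Finset.mem_univ a), Finset.sdiff_singleton_eq_erase]
  ring

end ExplStrategy

lemma IsOptimal.walkWeight_le {h : V} {w : Sym2 V → ℝ} {q : ℝ} {S : ExplStrategy G h}
    (hS : IsOptimal w q S) (a : Fin S.k) {e : V} (W : G.Walk h e)
    (hcov : ∀ u ∈ (S.walks a).support, u ∈ W.support ∨ ∃ j ≠ a, u ∈ (S.walks j).support) :
    walkWeight w (S.walks a) ≤ walkWeight w W := by
  have := hS (S.replaceWalk a W hcov)
  rw [ExplStrategy.stratCost_replaceWalk] at this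
  linarith

section InSubtree

variable {r v u z : V}

lemma InSubtree.mem_support_of_mem_support (hvu : InSubtree G r v u) {x : V}
    (W : G.Walk r x) (hu : u ∈ W.support) : v ∈ W.support := by
  classical
  exact W.support_takeUntil_subset_support hu <|
    Walk.support_bypass_subset_support _ <| hvu ⟨_, (W.takeUntil u hu).bypass_isPath⟩

lemma InSubtree.trans (hvu : InSubtree G r v u) (huz : InSubtree G r u z) :
    InSubtree G r v z :=
  fun P => hvu.mem_support_of_mem_support P.1 (huz P)

lemma InSubtree.ne_root (hvu : InSubtree G r v u) (hv : v ≠ r) : u ≠ r := by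
  rintro rfl
  simpa [hv] using hvu ⟨Walk.nil, Walk.IsPath.nil⟩

lemma InSubtree.dist_lt (huz : InSubtree G r u z) (hne : u ≠ z) (hr : G.Reachable r z) :
    G.dist r u < G.dist r z := by
  classical
  obtain ⟨P, hP, hlen⟩ := hr.exists_path_of_dist
  have hu := huz ⟨P, hP⟩
  have hdrop : (P.dropUntil u hu).length ≠ 0 := fun h0 => hne (Walk.eq_of_length_eq_zero h0)
  have hsplit := congrArg Walk.length (P.take_spec hu)
  rw [Walk.length_append] at hsplit
  calc G.dist r u ≤ (P.takeUntil u hu).length := dist_le _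
    _ < P.length := by omega
    _ = G.dist r z := hlen

end InSubtree

lemma SimpleGraph.IsAcyclic.eq_of_adj_of_not_inSubtree (hG : G.IsAcyclic) {r m x y : V}
    (hx : G.Adj m x) (hy : G.Adj m y) (hxT : ¬InSubtree G r m x) (hyT : ¬InSubtree G r m y) :
    x = y := by
  simp only [InSubtree, not_forall] at hxT hyT
  obtain ⟨P, hP⟩ := hxT
  obtain ⟨Q, hQ⟩ := hyT
  have := congrArg Subtype.val <|
    (hG.subsingleton_path r m).elim ⟨_, P.2.concat hP hx.symm⟩ ⟨_, Q.2.concat hQ hy.symm⟩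
  exact (Walk.concat_inj this).1

lemma SimpleGraph.IsTree.exists_isTChild_of_not_isTLeaf (hG : G.IsTree) {r m : V}
    (hmr : m ≠ r) (hm : ¬IsTLeaf G r m) : ∃ c, IsTChild G r m c := by
  by_contra! hnone
  have hchild : ∀ c, G.Adj m c → ¬InSubtree G r m c := fun c hc hcT => hnone c ⟨hc, hcT⟩
  have hnil := Walk.not_nil_of_ne (p := (hG.connected m r).some) hmr
  have hp := Walk.adj_snd hnil
  exact hm ⟨hmr, _, hp, fun y hy =>
    hG.isAcyclic.eq_of_adj_of_not_inSubtree hy hp (hchild y hy) (hchild _ hp)⟩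

end

theorem walk_entering_subtree_visits_leaf_general {V : Type*}
    (G : SimpleGraph V) (hG : G.IsTree)
    (r : V) (w : Sym2 V → ℝ) (hw : ∀ e ∈ G.edgeSet, 0 < w e)
    (q : ℝ)
    (S : ExplStrategy G r) (hS : IsOptimal w q S)
    (v : V) (hv : v ≠ r) (a : Fin S.k)
    (hvisit : ∃ u ∈ (S.walks a).support, InSubtree G r v u) :
    ∃ x, IsTLeaf G r x ∧ InSubtree G r v x ∧ x ∈ (S.walks a).support := by
  classical
  by_contra! hnoleaf
  obtain ⟨m, hmA, hmax⟩ :=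
    ((S.walks a).support.toFinset.filter (InSubtree G r v)).exists_max_image (G.dist r)
      (by obtain ⟨u, hu, hvu⟩ := hvisit; exact ⟨u, by simp [hu, hvu]⟩)
  simp only [Finset.mem_filter, List.mem_toFinset, and_imp] at hmA hmax
  obtain ⟨hmW, hvm⟩ := hmA
  have hmr := hvm.ne_root hv
  have hout : ∀ z, G.Adj m z → z ∈ (S.walks a).support → ¬InSubtree G r m z :=
    fun z hmz hz hzT =>
      (hzT.dist_lt hmz.ne (hG.connected r z)).not_ge (hmax z hz (hvm.trans hzT))
  obtain ⟨c, hmc, hcT⟩ :=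
    hG.exists_isTChild_of_not_isTLeaf hmr fun hleaf => hnoleaf m hleaf hvm hmW
  obtain ⟨i, hic⟩ := S.covers c
  have hia : i ≠ a := by rintro rfl; exact hout c hmc hic hcT
  obtain ⟨e', W', hlt, hsup⟩ := exists_walkWeight_lt_of_neighbors_eq hw (S.walks a) hmW hmr
    fun y z hy hz hyW hzW =>
      hG.isAcyclic.eq_of_adj_of_not_inSubtree hy hz (hout y hy hyW) (hout z hz hzW)
  refine hlt.not_ge (hS.walkWeight_le a W' fun u hu => ?_)
  by_cases hum : u = m
  · exact Or.inr ⟨i, hia, hum ▸ hcT.mem_support_of_mem_support _ hic⟩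
  · exact Or.inl (hsup u hu hum)

/-- In every cost-optimal exploration strategy of an edge-weighted tree, if a walk
visits a vertex of the subtree `T_v` (`v ≠ r`), then it visits a leaf of `T_v`. -/
theorem walk_entering_subtree_visits_leaf {V : Type*} [Fintype V]
    (G : SimpleGraph V) (hG : G.IsTree) (hcard : 1 < Fintype.card V)
    (r : V) (w : Sym2 V → ℝ) (hw : ∀ e ∈ G.edgeSet, 0 < w e)
    (q : ℝ) (hq : 0 ≤ q)
    (S : ExplStrategy G r) (hS : IsOptimal w q S)
    (v : V) (hv : v ≠ r) (a : Fin S.k)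
    (hvisit : ∃ u ∈ (S.walks a).support, InSubtree G r v u) :
    ∃ x, IsTLeaf G r x ∧ InSubtree G r v x ∧ x ∈ (S.walks a).support :=
  walk_entering_subtree_visits_leaf_general G hG r w hw q S hS v hv a hvisit
end

section
/- Fix an integer l ≥ 1 and integers l_1, …, l_l with 1 ≤ l_i ≤ l. Let T be the tree with unit edge weights consisting of a path from v_0 through v_1, …, v_l to v_{l+1}, in which consecutive vertices v_i and v_{i+1} are joined by a path of l unit-weight edges, together with, for each i ∈ {1, …, l}, a pendant path of l_i unit-weight edges attached at v_i and ending in a leaf u_i; the homebase is v_0 and the invoking cost is q ≥ 0. Then there exists an exploration strategy of T using a single walk whose cost is q + l² + l + 2·Σ_{i=1}^l l_i; in particular the minimum exploration cost of T is at most q + l² + l + 2·Σ_{i=1}^l l_i. -/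
open SimpleGraph

/-- Vertices of the tree of Section 6: a spine path of `l·(l+1)` unit edges with
spine positions `0, …, l·(l+1)` (the vertex `v_m` of the paper sits at position
`m·l`), together with, for each `i : Fin l`, a pendant path with vertices
`(i, 0), …, (i, l_i - 1)` attached at `v_{i+1}`. -/
abbrev CatV (l : ℕ) (li : Fin l → ℕ) : Type :=
  Fin (l * (l + 1) + 1) ⊕ ((i : Fin l) × Fin (li i))

/-- Generating relation for the tree: consecutive spine vertices are adjacent,
the pendant vertex `(i, 0)` is attached to the spine position `(i+1)·l` (the paper's
`v_{i+1}`), and consecutive pendant vertices are adjacent. -/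
def catRel (l : ℕ) (li : Fin l → ℕ) : CatV l li → CatV l li → Prop
  | Sum.inl a, Sum.inl b => (b : ℕ) = (a : ℕ) + 1
  | Sum.inl a, Sum.inr u => (a : ℕ) = ((u.1 : ℕ) + 1) * l ∧ (u.2 : ℕ) = 0
  | Sum.inr u, Sum.inr u' => u.1 = u'.1 ∧ (u'.2 : ℕ) = (u.2 : ℕ) + 1
  | Sum.inr _, Sum.inl _ => False

/-- The tree of Section 6, with unit edge weights. -/
def catGraph (l : ℕ) (li : Fin l → ℕ) : SimpleGraph (CatV l li) :=
  SimpleGraph.fromRel (catRel l li)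

/-! The walk is a depth-first traversal: it runs along the spine from `v_0` to `v_{l+1}` and,
on reaching each `v_i`, goes down the pendant path to `u_i` and back. The spine costs `l (l + 1)`
and the pendant at `v_i` costs `2 l_i`; since costs are nonnegative when `q ≥ 0`, the set of
strategy costs is bounded below and its infimum is at most the cost of this single walk. -/

open Finset

theorem walkWeight_one {V : Type*} {G : SimpleGraph V} {a b : V} (p : G.Walk a b) :
    walkWeight (fun _ => 1) p = p.length := by
  simp [walkWeight, List.map_const', List.sum_replicate]

theorem walkWeight_nonneg {V : Type*} {G : SimpleGraph V} {w : Sym2 V → ℝ} (hw : ∀ e, 0 ≤ w e)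
    {a b : V} (p : G.Walk a b) : 0 ≤ walkWeight w p :=
  List.sum_nonneg (by simpa using fun e _ => hw e)

section Strategy

variable {V : Type*} {G : SimpleGraph V} {h : V}

def ExplStrategy.ofWalk_s15 {v : V} (p : G.Walk h v) (hp : ∀ u, u ∈ p.support) :
    ExplStrategy G h :=
  ⟨1, one_pos, fun _ => v, fun _ => p, fun u => ⟨0, hp u⟩⟩

theorem stratCost_ofWalk (w : Sym2 V → ℝ) (q : ℝ) {v : V} (p : G.Walk h v)
    (hp : ∀ u, u ∈ p.support) :
    stratCost w q (ExplStrategy.ofWalk_s15 p hp) = q + walkWeight w p := by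
  show ((1 : ℕ) : ℝ) * q + ∑ _i : Fin 1, walkWeight w p = q + walkWeight w p
  simp

theorem stratCost_nonneg {w : Sym2 V → ℝ} {q : ℝ} (hw : ∀ e, 0 ≤ w e) (hq : 0 ≤ q)
    (S : ExplStrategy G h) : 0 ≤ stratCost w q S :=
  add_nonneg (mul_nonneg S.k.cast_nonneg hq) (sum_nonneg fun _ _ => walkWeight_nonneg hw _)

theorem sInf_stratCost_le {w : Sym2 V → ℝ} {q : ℝ} (hw : ∀ e, 0 ≤ w e) (hq : 0 ≤ q)
    (S : ExplStrategy G h) :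
    sInf {c : ℝ | ∃ S : ExplStrategy G h, stratCost w q S = c} ≤ stratCost w q S :=
  csInf_le ⟨0, by rintro _ ⟨S', rfl⟩; exact stratCost_nonneg hw hq S'⟩ ⟨S, rfl⟩

end Strategy

theorem SimpleGraph.exists_walk_of_adj_succ {V : Type*} {G : SimpleGraph V} (f : ℕ → V)
    {a b : ℕ} (hab : a ≤ b) (hf : ∀ k, a ≤ k → k < b → G.Adj (f k) (f (k + 1))) :
    ∃ p : G.Walk (f a) (f b), p.length = b - a ∧ ∀ k, a ≤ k → k ≤ b → f k ∈ p.support := by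
  induction b, hab using Nat.le_induction with
  | base => exact ⟨Walk.nil, by simp, fun k h₁ h₂ => by simp [le_antisymm h₂ h₁]⟩
  | succ b hab ih =>
    obtain ⟨p, hlen, hsupp⟩ := ih fun k h₁ h₂ => hf k h₁ (by omega)
    refine ⟨p.append (hf b hab (by omega)).toWalk, by simp; omega, fun k h₁ h₂ => ?_⟩
    rw [Walk.mem_support_append_iff]
    rcases Nat.lt_or_ge k (b + 1) with hk | hk
    · exact Or.inl (hsupp k h₁ (by omega))
    · exact Or.inr (by simp [le_antisymm h₂ hk])

section CatTree

variable (l : ℕ) (li : Fin l → ℕ)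

-- `Fin.ofNat` wraps around, so only positions `k ≤ l * (l + 1)` are meaningful.
def catSpine (k : ℕ) : CatV l li := Sum.inl (Fin.ofNat _ k)

/-- The pendant path at `v_{i+1}` read from its attachment point: index `0` is the spine
vertex and index `j + 1` the pendant vertex `(i, j)`; indices past the leaf are junk. -/
def catPendant (i : Fin l) : ℕ → CatV l li
  | 0 => catSpine l li ((i + 1) * l)
  | j + 1 => if hj : j < li i then Sum.inr ⟨i, j, hj⟩ else catSpine l li ((i + 1) * l)

def catPendLen (i : ℕ) : ℕ := if hi : i < l then li ⟨i, hi⟩ else 0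

variable {l li}

theorem catSpine_eq_inl {m : ℕ} (hm : m ≤ l * (l + 1)) :
    catSpine l li m = Sum.inl ⟨m, Nat.lt_succ_of_le hm⟩ := by
  simp [catSpine, Fin.ext_iff, Nat.mod_eq_of_lt (Nat.lt_succ_of_le hm)]

theorem catGraph_adj_catSpine {k : ℕ} (hk : k < l * (l + 1)) :
    (catGraph l li).Adj (catSpine l li k) (catSpine l li (k + 1)) := by
  rw [catSpine_eq_inl hk.le, catSpine_eq_inl hk, catGraph, fromRel_adj]
  exact ⟨by simp, Or.inl rfl⟩

theorem catGraph_adj_catPendant (i : Fin l) {j : ℕ} (hj : j < li i) :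
    (catGraph l li).Adj (catPendant l li i j) (catPendant l li i (j + 1)) := by
  rw [catGraph, fromRel_adj]
  cases j with
  | zero =>
    have hi : ((i : ℕ) + 1) * l ≤ l * (l + 1) := by nlinarith [i.isLt]
    simp only [catPendant, dif_pos hj, catSpine_eq_inl hi]
    exact ⟨by simp, Or.inl ⟨rfl, rfl⟩⟩
  | succ j =>
    simp only [catPendant, dif_pos hj, dif_pos (Nat.lt_of_succ_lt hj)]
    exact ⟨by simp, Or.inl ⟨rfl, rfl⟩⟩

theorem exists_catPendant_roundTrip (i : Fin l) :
    ∃ p : (catGraph l li).Walk (catSpine l li ((i + 1) * l)) (catSpine l li ((i + 1) * l)),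
      p.length = 2 * li i ∧ ∀ j ≤ li i, catPendant l li i j ∈ p.support := by
  obtain ⟨p, hlen, hsupp⟩ := exists_walk_of_adj_succ (catPendant l li i) (Nat.zero_le (li i))
    fun j _ hj => catGraph_adj_catPendant i hj
  have h0 : catPendant l li i 0 = catSpine l li ((i + 1) * l) := rfl
  refine ⟨(p.append p.reverse).copy h0 h0, by simp [hlen]; ring, fun j hj => ?_⟩
  rw [Walk.support_copy, Walk.mem_support_append_iff]
  exact Or.inl (hsupp j (Nat.zero_le j) hj)

theorem catGraph_exists_walk_to_catSpine_mul (i : ℕ) (hi : i ≤ l) :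
    ∃ p : (catGraph l li).Walk (catSpine l li 0) (catSpine l li (i * l)),
      p.length = i * l + 2 * ∑ k ∈ range i, catPendLen l li k ∧
      (∀ m ≤ i * l, catSpine l li m ∈ p.support) ∧
      ∀ k : Fin l, (k : ℕ) < i → ∀ j ≤ li k, catPendant l li k j ∈ p.support := by
  induction i with
  | zero =>
    rw [zero_mul]
    refine ⟨Walk.nil, by simp, fun m hm => ?_, fun k hk => absurd hk (Nat.not_lt_zero _)⟩
    simp [Nat.le_zero.1 (by simpa using hm)]
  | succ i ih =>
    obtain ⟨p, hlen, hspine, hpend⟩ := ih (by omega)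
    have hstep : (i + 1) * l = i * l + l := add_one_mul i l
    have hbound : (i + 1) * l ≤ l * (l + 1) := by nlinarith
    obtain ⟨s, hslen, hssupp⟩ := exists_walk_of_adj_succ (catSpine l li)
      (Nat.le.intro hstep.symm) fun k _ hk => catGraph_adj_catSpine (by omega)
    obtain ⟨t, htlen, htsupp⟩ := exists_catPendant_roundTrip (li := li) ⟨i, hi⟩
    refine ⟨p.append (s.append t), ?_, fun m hm => ?_, fun k hk j hj => ?_⟩
    · rw [Walk.length_append, Walk.length_append, hlen, hslen, htlen, sum_range_succ,
        catPendLen, dif_pos (show i < l from hi)]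
      omega
    · simp only [Walk.mem_support_append_iff]
      rcases le_or_gt m (i * l) with hm' | hm'
      · exact Or.inl (hspine m hm')
      · exact Or.inr (Or.inl (hssupp m hm'.le hm))
    · simp only [Walk.mem_support_append_iff]
      rcases Nat.lt_succ_iff_lt_or_eq.1 hk with hk' | hk'
      · exact Or.inl (hpend k hk' j hj)
      · obtain rfl : k = ⟨i, hi⟩ := Fin.ext hk'
        exact Or.inr (Or.inr (htsupp j hj))

theorem catGraph_exists_covering_walk :
    ∃ (v : CatV l li) (p : (catGraph l li).Walk (Sum.inl 0) v),
      p.length = l ^ 2 + l + 2 * ∑ i, li i ∧ ∀ u, u ∈ p.support := by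
  obtain ⟨p, hlen, hspine, hpend⟩ := catGraph_exists_walk_to_catSpine_mul (li := li) l le_rfl
  obtain ⟨s, hslen, hssupp⟩ := exists_walk_of_adj_succ (catSpine l li)
    (Nat.mul_le_mul_left l (Nat.le_succ l)) fun k _ hk => catGraph_adj_catSpine hk
  have hstart : catSpine l li 0 = Sum.inl 0 := catSpine_eq_inl (Nat.zero_le _)
  refine ⟨_, (p.append s).copy hstart rfl, ?_, ?_⟩
  · rw [Walk.length_copy, Walk.length_append, hlen, hslen, Nat.mul_succ, Nat.add_sub_cancel_left,
      ← Fin.sum_univ_eq_sum_range]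
    simp only [catPendLen, Fin.is_lt, dif_pos, Fin.eta]
    ring
  · rintro (m | ⟨i, j⟩) <;> rw [Walk.support_copy, Walk.mem_support_append_iff]
    · have hm : (m : ℕ) ≤ l * (l + 1) := Nat.lt_succ_iff.1 m.isLt
      rw [show Sum.inl m = catSpine l li (m : ℕ) by simp [catSpine_eq_inl hm]]
      rcases le_or_gt (m : ℕ) (l * l) with hm' | hm'
      · exact Or.inl (hspine m hm')
      · exact Or.inr (hssupp m hm'.le hm)
    · rw [show Sum.inr ⟨i, j⟩ = catPendant l li i (j + 1) by simp [catPendant, j.isLt]]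
      exact Or.inl (hpend i i.isLt (j + 1) j.isLt)

end CatTree

theorem cat_tree_single_walk_cost_general (l : ℕ) (li : Fin l → ℕ) (q : ℝ) (hq : 0 ≤ q) :
    (∃ S : ExplStrategy (catGraph l li) (Sum.inl 0), S.k = 1 ∧
        stratCost (fun _ => 1) q S =
          q + (l : ℝ) ^ 2 + (l : ℝ) + 2 * ∑ i, (li i : ℝ)) ∧
    sInf {c : ℝ | ∃ S : ExplStrategy (catGraph l li) (Sum.inl 0),
        stratCost (fun _ => 1) q S = c}
      ≤ q + (l : ℝ) ^ 2 + (l : ℝ) + 2 * ∑ i, (li i : ℝ) := by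
  obtain ⟨v, p, hlen, hcover⟩ := catGraph_exists_covering_walk (l := l) (li := li)
  have hcost : stratCost (fun _ => 1) q (ExplStrategy.ofWalk_s15 p hcover) =
      q + (l : ℝ) ^ 2 + (l : ℝ) + 2 * ∑ i, (li i : ℝ) := by
    rw [stratCost_ofWalk, walkWeight_one, hlen]
    push_cast
    ring
  exact ⟨⟨_, rfl, hcost⟩, hcost ▸ sInf_stratCost_le (fun _ => zero_le_one) hq _⟩

/-- For the tree `T` of Section 6 (spine `v_0, …, v_{l+1}` with consecutive `v_i`
joined by paths of `l` unit edges, and a pendant path of `l_i` unit edges ending in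
the leaf `u_i` attached at each `v_i`, `1 ≤ l_i ≤ l`), homebase `v_0` and invoking
cost `q ≥ 0`, there is a single-walk exploration strategy of cost
`q + l² + l + 2·Σ_i l_i`; in particular the minimum exploration cost is at most
`q + l² + l + 2·Σ_i l_i`. -/
theorem cat_tree_single_walk_cost (l : ℕ) (hl : 1 ≤ l) (li : Fin l → ℕ)
    (hli : ∀ i, 1 ≤ li i ∧ li i ≤ l) (q : ℝ) (hq : 0 ≤ q) :
    (∃ S : ExplStrategy (catGraph l li) (Sum.inl 0), S.k = 1 ∧
        stratCost (fun _ => 1) q S =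
          q + (l : ℝ) ^ 2 + (l : ℝ) + 2 * ∑ i, (li i : ℝ)) ∧
    sInf {c : ℝ | ∃ S : ExplStrategy (catGraph l li) (Sum.inl 0),
        stratCost (fun _ => 1) q S = c}
      ≤ q + (l : ℝ) ^ 2 + (l : ℝ) + 2 * ∑ i, (li i : ℝ) :=
  cat_tree_single_walk_cost_general l li q hq
end
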